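/- An atom a in an integral domain D is prime if and only if for all b ∈ D, a ∤ b implies (a,b)_v = D (equivalently, aD ∩ bD = abD). -/
import Mathlib


/-- In a domain, `(a,b)_v = D` is equivalent to `aD ∩ bD = abD`; we use the latter. -/
theorem stmt4 (D : Type*) [CommRing D] [IsDomain D] (a : D) (ha : Irreducible a) :
    Prime a ↔ ∀ b : D, ¬ a ∣ b →
      Ideal.span {a} ⊓ Ideal.span {b} = Ideal.span ({a * b} : Set D) := by
  constructor
  · intro hp b hb
    apply le_antisymm
    · intro x hx
      rw [Ideal.mem_inf] at hx
      obtain ⟨hxa, hxb⟩ := hx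
      rw [Ideal.mem_span_singleton] at hxa hxb ⊢
      obtain ⟨d, hd⟩ := hxb
      have : a ∣ b * d := hd ▸ hxa
      rcases hp.2.2 b d this with h | ⟨e, he⟩
      · exact absurd h hb
      · exact ⟨e, by rw [hd, he]; ring⟩
    · rw [Ideal.span_singleton_le_iff_mem, Ideal.mem_inf,
        Ideal.mem_span_singleton, Ideal.mem_span_singleton]
      exact ⟨⟨b, rfl⟩, ⟨a, mul_comm a b⟩⟩
  · intro h
    refine ⟨ha.ne_zero, ha.not_isUnit, fun b c habc => ?_⟩
    by_cases hb : a ∣ b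
    · exact Or.inl hb
    · right
      have hbc : b * c ∈ Ideal.span {a} ⊓ Ideal.span {b} := by
        rw [Ideal.mem_inf, Ideal.mem_span_singleton, Ideal.mem_span_singleton]
        exact ⟨habc, ⟨c, rfl⟩⟩
      rw [h b hb, Ideal.mem_span_singleton] at hbc
      obtain ⟨e, he⟩ := hbc
      have hb0 : b ≠ 0 := fun h0 => hb (h0 ▸ dvd_zero a)
      refine ⟨e, mul_left_cancel₀ hb0 ?_⟩
      rw [he]; ring
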